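/- There exists a nonnegative polynomial on ℝ² that is not a sum of squares of polynomials; specifically, the Motzkin polynomial m(x,y) = x⁴y² + x²y⁴ − 3x²y² + 1 satisfies m(x,y) ≥ 0 for all real x, y, but m is not a sum of squares of polynomials. -/

import Mathlib

open MvPolynomial

/-- The Motzkin polynomial x⁴y² + x²y⁴ − 3x²y² + 1. -/
noncomputable def motzkin : MvPolynomial (Fin 2) ℝ :=
  X 0 ^ 4 * X 1 ^ 2 + X 0 ^ 2 * X 1 ^ 4 - 3 * X 0 ^ 2 * X 1 ^ 2 + 1

/-- Exponent vector (a, b) for x^a y^b. -/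
noncomputable def D (a b : ℕ) : Fin 2 →₀ ℕ := Finsupp.single 0 a + Finsupp.single 1 b

@[simp] lemma D_apply0 (a b : ℕ) : D a b 0 = a := by simp [D]
@[simp] lemma D_apply1 (a b : ℕ) : D a b 1 = b := by simp [D, Finsupp.single_apply]

lemma eq_D (d : Fin 2 →₀ ℕ) : d = D (d 0) (d 1) := by ext i; fin_cases i <;> simp

lemma D_add (a b a' b' : ℕ) : D a b + D a' b' = D (a+a') (b+b') := by
  ext i; fin_cases i <;> simp

@[simp] lemma D_eq_iff {a b a' b' : ℕ} : D a b = D a' b' ↔ a = a' ∧ b = b' := by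
  constructor
  · intro h
    exact ⟨by simpa using DFunLike.congr_fun h 0, by simpa using DFunLike.congr_fun h 1⟩
  · rintro ⟨rfl, rfl⟩; rfl


lemma motzkin_eq : motzkin = monomial (D 4 2) 1 + monomial (D 2 4) 1
    - monomial (D 2 2) 3 + monomial (D 0 0) 1 := by
  have h3 : (3 : MvPolynomial (Fin 2) ℝ) = C 3 := (map_ofNat C 3).symm
  have h1 : (1 : MvPolynomial (Fin 2) ℝ) = monomial (D 0 0) 1 := by
    simp [D, monomial_zero']
  rw [motzkin, h3]
  rw [X_pow_eq_monomial, X_pow_eq_monomial, X_pow_eq_monomial, X_pow_eq_monomial,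
    monomial_mul, monomial_mul, C_mul_monomial, monomial_mul]
  norm_num [D]

lemma coeff_motzkin (e : Fin 2 →₀ ℕ) : coeff e motzkin =
    (if e = D 4 2 then 1 else 0) + (if e = D 2 4 then 1 else 0)
    - (if e = D 2 2 then 3 else 0) + (if e = D 0 0 then 1 else 0) := by
  rw [motzkin_eq]
  simp [coeff_monomial, eq_comm]

lemma coeff_sq (p : MvPolynomial (Fin 2) ℝ) (u v au bv : ℕ) (hu : au + au = u) (hv : bv + bv = v)
    (h : ∀ a b a' b', a + a' = u → b + b' = v → ¬(a = au ∧ b = bv) →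
      coeff (D a b) p * coeff (D a' b') p = 0) :
    coeff (D u v) (p ^ 2) = coeff (D au bv) p ^ 2 := by
  rw [pow_two, coeff_mul]
  rw [Finset.sum_eq_single_of_mem (D au bv, D au bv)
    (by rw [Finset.HasAntidiagonal.mem_antidiagonal, D_add, hu, hv])]
  · rw [pow_two]
  · rintro ⟨y, z⟩ hb hne
    rw [Finset.HasAntidiagonal.mem_antidiagonal] at hb
    have h0 : y 0 + z 0 = u := by simpa using DFunLike.congr_fun hb 0
    have h1 : y 1 + z 1 = v := by simpa using DFunLike.congr_fun hb 1
    rw [eq_D y, eq_D z]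
    apply h _ _ _ _ h0 h1
    rintro ⟨ha, hb'⟩
    apply hne
    have hz0 : z 0 = au := by omega
    have hz1 : z 1 = bv := by omega
    rw [Prod.mk.injEq, eq_D y, eq_D z, ha, hb', hz0, hz1]
    exact ⟨rfl, rfl⟩

lemma sos_coeff {k : ℕ} (s : Fin k → MvPolynomial (Fin 2) ℝ) (u v au bv : ℕ)
    (hu : au + au = u) (hv : bv + bv = v)
    (h : ∀ i, ∀ a b a' b', a + a' = u → b + b' = v → ¬(a = au ∧ b = bv) →
      coeff (D a b) (s i) * coeff (D a' b') (s i) = 0) :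
    coeff (D u v) (∑ i, s i ^ 2) = ∑ i, coeff (D au bv) (s i) ^ 2 := by
  rw [coeff_sum]
  exact Finset.sum_congr rfl fun i _ => coeff_sq (s i) u v au bv hu hv (h i)

lemma sum_sq_zero {k : ℕ} {f : Fin k → ℝ} (h : ∑ i, f i ^ 2 = 0) (i : Fin k) : f i = 0 := by
  have := (Finset.sum_eq_zero_iff_of_nonneg (fun j _ => sq_nonneg (f j))).mp h i
    (Finset.mem_univ i)
  exact pow_eq_zero_iff (by norm_num) |>.mp this

set_option maxHeartbeats 2000000 in
/-- The Motzkin polynomial is nonnegative on ℝ² but is not a sum of squares. -/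
theorem motzkin_nonneg_not_sos :
    (∀ x : Fin 2 → ℝ, 0 ≤ MvPolynomial.eval x motzkin) ∧
      ¬ ∃ (k : ℕ) (s : Fin k → MvPolynomial (Fin 2) ℝ), motzkin = ∑ i, s i ^ 2 := by
  constructor
  · intro x
    simp only [motzkin, map_add, map_sub, map_mul, map_pow, map_one, eval_X, map_ofNat]
    set a := x 0; set b := x 1
    nlinarith [sq_nonneg (a^2*b - b), sq_nonneg (a*b^2 - a), sq_nonneg (a*b*(a*b-1)),
      sq_nonneg (a*b+1), sq_nonneg (a*b-1), sq_nonneg (a^2*b^2-1), sq_nonneg a, sq_nonneg b]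
  · rintro ⟨k, s, hs⟩
    -- the grlex-type weight
    set w : (Fin 2 →₀ ℕ) → Lex (ℕ × ℕ) := fun d => toLex (d 0 + d 1, d 0) with hw
    set T : Finset (Fin 2 →₀ ℕ) := Finset.univ.biUnion (fun i => (s i).support) with hT
    have hmem : ∀ i d, coeff d (s i) ≠ 0 → d ∈ T := by
      intro i d hd
      exact Finset.mem_biUnion.mpr ⟨i, Finset.mem_univ i, mem_support_iff.mpr hd⟩
    by_cases hTn : T.Nonempty
    swap
    · -- all s i = 0, so motzkin = 0, contradiction via coeff at (2,2)
      have : coeff (D 2 2) motzkin = 0 := by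
        rw [hs, coeff_sum]
        apply Finset.sum_eq_zero
        intro i _
        rw [pow_two, coeff_mul]
        apply Finset.sum_eq_zero
        rintro ⟨y, z⟩ _
        have : coeff y (s i) = 0 := by
          by_contra hy
          exact hTn ⟨y, hmem i y hy⟩
        rw [this, zero_mul]
      rw [coeff_motzkin] at this
      norm_num at this
    -- maximal monomial
    obtain ⟨μ, hμT, hmax⟩ := T.exists_max_image w hTn
    have hwadd : ∀ y z : Fin 2 →₀ ℕ, w (y + z) = w y + w z := by
      intro y z
      simp only [hw, Finsupp.add_apply]
      rw [show (toLex (y 0 + y 1, y 0) + toLex (z 0 + z 1, z 0) : Lex (ℕ × ℕ))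
        = toLex (y 0 + y 1 + (z 0 + z 1), y 0 + z 0) from rfl]
      exact congrArg toLex (Prod.ext (by ring) rfl)
    have hkey : coeff (μ + μ) motzkin = ∑ i, coeff μ (s i) ^ 2 := by
      rw [hs, coeff_sum]
      apply Finset.sum_congr rfl
      intro i _
      rw [pow_two, coeff_mul]
      rw [Finset.sum_eq_single_of_mem (μ, μ) (by rw [Finset.HasAntidiagonal.mem_antidiagonal])]
      · rw [pow_two]
      · rintro ⟨y, z⟩ hb hne
        rw [Finset.HasAntidiagonal.mem_antidiagonal] at hb
        by_cases hy : coeff y (s i) = 0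
        · rw [hy, zero_mul]
        by_cases hz : coeff z (s i) = 0
        · rw [hz, mul_zero]
        exfalso
        have hyμ : w y ≤ w μ := hmax y (hmem i y hy)
        have hzμ : w z ≤ w μ := hmax z (hmem i z hz)
        have hsum : w y + w z = w μ + w μ := by rw [← hwadd, ← hwadd, hb]
        have hyw : w y = w μ := by
          by_contra hne'
          have h' : w y < w μ := lt_of_le_of_ne hyμ hne'
          have h'' : w y + w z < w μ + w μ := add_lt_add_of_lt_of_le h' hzμ
          exact absurd hsum (ne_of_lt h'')
        have hzw : w z = w μ := by
          have h2 := hsum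
          rw [hyw] at h2
          exact add_left_cancel h2
        have hy0 : y 0 = μ 0 ∧ y 0 + y 1 = μ 0 + μ 1 := by
          have := congrArg ofLex hyw
          simp only [hw, ofLex_toLex, Prod.mk.injEq] at this
          exact ⟨this.2, this.1⟩
        have hz0 : z 0 = μ 0 ∧ z 0 + z 1 = μ 0 + μ 1 := by
          have := congrArg ofLex hzw
          simp only [hw, ofLex_toLex, Prod.mk.injEq] at this
          exact ⟨this.2, this.1⟩
        apply hne
        rw [Prod.mk.injEq, eq_D y, eq_D z, eq_D μ]
        constructor
        · rw [D_eq_iff]; omega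
        · rw [D_eq_iff]; omega
    -- coeff (μ+μ) motzkin ≠ 0
    have hne0 : coeff (μ + μ) motzkin ≠ 0 := by
      rw [hkey]
      obtain ⟨i₀, _, hi₀⟩ := Finset.mem_biUnion.mp hμT
      have h0 : coeff μ (s i₀) ≠ 0 := mem_support_iff.mp hi₀
      have hpos : 0 < ∑ i, coeff μ (s i) ^ 2 :=
        Finset.sum_pos' (fun j _ => sq_nonneg _)
          ⟨i₀, Finset.mem_univ i₀, by positivity⟩
      exact ne_of_gt hpos
    -- hence μ has degree ≤ 3
    have hμdeg : μ 0 + μ 1 ≤ 3 := by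
      rw [coeff_motzkin] at hne0
      by_contra hgt
      apply hne0
      rw [eq_D (μ + μ)]
      simp only [Finsupp.add_apply, D_eq_iff]
      rw [if_neg (by omega), if_neg (by omega), if_neg (by omega), if_neg (by omega)]
      norm_num
    -- degree bound for all monomials
    have Hdeg : ∀ i a b, 3 < a + b → coeff (D a b) (s i) = 0 := by
      intro i a b hab
      by_contra hc
      have := hmax (D a b) (hmem i _ hc)
      rw [hw] at this
      simp only [D_apply0, D_apply1] at this
      rcases Prod.Lex.le_iff.mp this with h | ⟨h, _⟩ <;> simp only [ofLex_toLex] at h <;> omega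
    -- now the chain of coefficient computations
    have hsum : ∀ u v au bv, au + au = u → bv + bv = v →
        (∀ i, ∀ a b a' b', a + a' = u → b + b' = v → ¬(a = au ∧ b = bv) →
          coeff (D a b) (s i) * coeff (D a' b') (s i) = 0) →
        coeff (D u v) motzkin = ∑ i, coeff (D au bv) (s i) ^ 2 := by
      intro u v au bv hu hv h
      rw [hs]
      exact sos_coeff s u v au bv hu hv h
    have c30 : ∀ i, coeff (D 3 0) (s i) = 0 := by
      have h : coeff (D 6 0) motzkin = ∑ i, coeff (D 3 0) (s i) ^ 2 := by
        apply hsum 6 0 3 0 rfl rfl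
        intro i a b a' b' h1 h2 hne
        rcases Nat.lt_or_ge 3 (a + b) with h' | h'
        · rw [Hdeg i a b h', zero_mul]
        rcases Nat.lt_or_ge 3 (a' + b') with h'' | h''
        · rw [Hdeg i a' b' h'', mul_zero]
        omega
      rw [coeff_motzkin] at h
      simp only [D_eq_iff] at h
      norm_num at h
      exact fun i => sum_sq_zero h.symm i
    have c03 : ∀ i, coeff (D 0 3) (s i) = 0 := by
      have h : coeff (D 0 6) motzkin = ∑ i, coeff (D 0 3) (s i) ^ 2 := by
        apply hsum 0 6 0 3 rfl rfl
        intro i a b a' b' h1 h2 hne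
        rcases Nat.lt_or_ge 3 (a + b) with h' | h'
        · rw [Hdeg i a b h', zero_mul]
        rcases Nat.lt_or_ge 3 (a' + b') with h'' | h''
        · rw [Hdeg i a' b' h'', mul_zero]
        omega
      rw [coeff_motzkin] at h
      simp only [D_eq_iff] at h
      norm_num at h
      exact fun i => sum_sq_zero h.symm i
    have c20 : ∀ i, coeff (D 2 0) (s i) = 0 := by
      have h : coeff (D 4 0) motzkin = ∑ i, coeff (D 2 0) (s i) ^ 2 := by
        apply hsum 4 0 2 0 rfl rfl
        intro i a b a' b' h1 h2 hne
        rcases Nat.lt_or_ge 3 (a + b) with h' | h'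
        · rw [Hdeg i a b h', zero_mul]
        rcases Nat.lt_or_ge 3 (a' + b') with h'' | h''
        · rw [Hdeg i a' b' h'', mul_zero]
        have hb : b = 0 := by omega
        have hb' : b' = 0 := by omega
        subst hb; subst hb'
        have : a = 3 ∨ a' = 3 := by omega
        rcases this with h | h
        · subst h; rw [c30 i, zero_mul]
        · subst h; rw [c30 i, mul_zero]
      rw [coeff_motzkin] at h
      simp only [D_eq_iff] at h
      norm_num at h
      exact fun i => sum_sq_zero h.symm i
    have c02 : ∀ i, coeff (D 0 2) (s i) = 0 := by
      have h : coeff (D 0 4) motzkin = ∑ i, coeff (D 0 2) (s i) ^ 2 := by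
        apply hsum 0 4 0 2 rfl rfl
        intro i a b a' b' h1 h2 hne
        rcases Nat.lt_or_ge 3 (a + b) with h' | h'
        · rw [Hdeg i a b h', zero_mul]
        rcases Nat.lt_or_ge 3 (a' + b') with h'' | h''
        · rw [Hdeg i a' b' h'', mul_zero]
        have ha : a = 0 := by omega
        have ha' : a' = 0 := by omega
        subst ha; subst ha'
        have : b = 3 ∨ b' = 3 := by omega
        rcases this with h | h
        · subst h; rw [c03 i, zero_mul]
        · subst h; rw [c03 i, mul_zero]
      rw [coeff_motzkin] at h
      simp only [D_eq_iff] at h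
      norm_num at h
      exact fun i => sum_sq_zero h.symm i
    have c10 : ∀ i, coeff (D 1 0) (s i) = 0 := by
      have h : coeff (D 2 0) motzkin = ∑ i, coeff (D 1 0) (s i) ^ 2 := by
        apply hsum 2 0 1 0 rfl rfl
        intro i a b a' b' h1 h2 hne
        have hb : b = 0 := by omega
        have hb' : b' = 0 := by omega
        subst hb; subst hb'
        have : a = 2 ∨ a' = 2 := by omega
        rcases this with h | h
        · subst h; rw [c20 i, zero_mul]
        · subst h; rw [c20 i, mul_zero]
      rw [coeff_motzkin] at h
      simp only [D_eq_iff] at h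
      norm_num at h
      exact fun i => sum_sq_zero h.symm i
    have c01 : ∀ i, coeff (D 0 1) (s i) = 0 := by
      have h : coeff (D 0 2) motzkin = ∑ i, coeff (D 0 1) (s i) ^ 2 := by
        apply hsum 0 2 0 1 rfl rfl
        intro i a b a' b' h1 h2 hne
        have ha : a = 0 := by omega
        have ha' : a' = 0 := by omega
        subst ha; subst ha'
        have : b = 2 ∨ b' = 2 := by omega
        rcases this with h | h
        · subst h; rw [c02 i, zero_mul]
        · subst h; rw [c02 i, mul_zero]
      rw [coeff_motzkin] at h
      simp only [D_eq_iff] at h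
      norm_num at h
      exact fun i => sum_sq_zero h.symm i
    -- final contradiction with coefficient of x²y²
    have hfinal : coeff (D 2 2) motzkin = ∑ i, coeff (D 1 1) (s i) ^ 2 := by
      apply hsum 2 2 1 1 rfl rfl
      intro i a b a' b' h1 h2 hne
      have hcase : (a=0∧b=0) ∨ (a=0∧b=1) ∨ (a=0∧b=2) ∨ (a=1∧b=0) ∨ (a=1∧b=2) ∨
          (a=2∧b=0) ∨ (a=2∧b=1) ∨ (a=2∧b=2) := by omega
      rcases hcase with ⟨rfl,rfl⟩|⟨rfl,rfl⟩|⟨rfl,rfl⟩|⟨rfl,rfl⟩|⟨rfl,rfl⟩|⟨rfl,rfl⟩|⟨rfl,rfl⟩|⟨rfl,rfl⟩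
      · obtain rfl : a' = 2 := by omega
        obtain rfl : b' = 2 := by omega
        rw [Hdeg i 2 2 (by norm_num), mul_zero]
      · rw [c01 i, zero_mul]
      · rw [c02 i, zero_mul]
      · rw [c10 i, zero_mul]
      · obtain rfl : a' = 1 := by omega
        obtain rfl : b' = 0 := by omega
        rw [c10 i, mul_zero]
      · rw [c20 i, zero_mul]
      · obtain rfl : a' = 0 := by omega
        obtain rfl : b' = 1 := by omega
        rw [c01 i, mul_zero]
      · rw [Hdeg i 2 2 (by norm_num), zero_mul]
    rw [coeff_motzkin] at hfinal
    simp only [D_eq_iff] at hfinal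
    norm_num at hfinal
    have : (0:ℝ) ≤ ∑ i, coeff (D 1 1) (s i) ^ 2 :=
      Finset.sum_nonneg fun i _ => sq_nonneg _
    linarith [hfinal ▸ this]
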